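/- Let ħ, m_e, ω_c, ω_p > 0; set m_p = m_e/ω_p², m_c = m_e/ω_c², M = (m_p + m_c)/2, μ = m_p·m_c/M and Ω = √(ω_p² + ω_c²). Let k_x, k_z, k_w ∈ ℝ and j ∈ ℕ, set v₀ = ħ·k_x/(√2·m_e), and define ψ : ℝ⁴ → ℂ by ψ(x,z,w,v) = exp(i(k_x·x + k_z·z + k_w·w))·exp(−μΩ(v − v₀)²/(2ħ))·He_j(√(2μΩ/ħ)·(v − v₀)). Then ψ is an eigenfunction of the effective Hamiltonian with eigenvalue ħ²k_z²/(2m_e) + ħ²k_w²/(2M) + ħΩ·(j + 1/2): for all (x,z,w,v) ∈ ℝ⁴, −(ħ²/(2m_e))·∂²ψ/∂z² − (ħ²/(2M))·∂²ψ/∂w² − (ħ²/(2μ))·∂²ψ/∂v² + (μΩ²/2)·[v²·ψ + (√2·iħ/m_e)·v·∂ψ/∂x − (ħ²/(2m_e²))·∂²ψ/∂x²] = (ħ²k_z²/(2m_e) + ħ²k_w²/(2M) + ħΩ·(j + 1/2))·ψ. These are the Landau polariton states, in which the cyclotron frequency ω_c is replaced by the polariton frequency Ω = √(ω_p² + ω_c²)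 and the levels remain degenerate in k_x. -/

import Mathlib

/-!
The state separates into a plane wave in `(x, z, w)` times a profile in `v`. On the plane
wave each `∂` acts as multiplication by `i k`, which turns the `x`-coupling into the shifted
potential `(μΩ²/2)(v - v₀)²`, so in `v` only a harmonic oscillator of mass `μ` and frequency `Ω`
is left. Its eigenfunctions are the rescaled Hermite functions `e^{-s²/4} He_j(s)`, by the
Hermite equation `He_j'' = s He_j' - j He_j`.
-/

open Polynomial

namespace Polynomial

theorem derivative_hermite_succ (n : ℕ) :
    derivative (hermite (n + 1)) = ((n : ℤ[X]) + 1) * hermite n := by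
  induction n with
  | zero => simp [hermite_succ]
  | succ n ih =>
    have h : derivative (hermite n) = X * hermite n - hermite (n + 1) := by
      rw [hermite_succ]; ring
    rw [hermite_succ (n + 1), derivative_sub, derivative_mul, derivative_X, ih, derivative_mul, h]
    simp only [derivative_add, derivative_natCast, derivative_one]
    push_cast
    ring

theorem derivative_derivative_hermite (n : ℕ) :
    derivative (derivative (hermite n)) =
      X * derivative (hermite n) - (n : ℤ[X]) * hermite n := by
  cases n with
  | zero => simp
  | succ n =>
    have h : derivative (hermite n) = X * hermite n - hermite (n + 1) := by
      rw [hermite_succ]; ring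
    rw [derivative_hermite_succ, derivative_mul, h]
    simp only [derivative_add, derivative_natCast, derivative_one]
    push_cast
    ring

end Polynomial

theorem hasDerivAt_exp_neg_sq_div_four_mul_aeval {R : Type*} [CommSemiring R] [Algebra R ℝ]
    (p : R[X]) (s : ℝ) :
    HasDerivAt (fun s => Real.exp (-(s ^ 2 / 4)) * aeval s p)
      (Real.exp (-(s ^ 2 / 4)) * (aeval s (derivative p) - s / 2 * aeval s p)) s := by
  have hg : HasDerivAt (fun s : ℝ => -(s ^ 2 / 4)) (-(s / 2)) s :=
    ((hasDerivAt_pow 2 s).div_const 4).fun_neg.congr_deriv (by norm_num; ring)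
  exact (hg.exp.mul (p.hasDerivAt_aeval s)).congr_deriv (by ring)

noncomputable def hermiteFunction (n : ℕ) (s : ℝ) : ℝ :=
  Real.exp (-(s ^ 2 / 4)) * aeval s (hermite n)

theorem Complex.ofReal_hermiteFunction (n : ℕ) (s : ℝ) :
    (hermiteFunction n s : ℂ) =
      Complex.exp (-((s ^ 2 / 4 : ℝ) : ℂ)) * aeval (s : ℂ) (hermite n) := by
  rw [hermiteFunction, ofReal_mul, ofReal_exp, ofReal_neg]
  exact congrArg _ (aeval_algebraMap_apply ℂ s (hermite n)).symm

theorem hasDerivAt_hermiteFunction (n : ℕ) (s : ℝ) :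
    HasDerivAt (hermiteFunction n)
      (Real.exp (-(s ^ 2 / 4)) * aeval s (derivative (hermite n))
        - s / 2 * hermiteFunction n s) s :=
  (hasDerivAt_exp_neg_sq_div_four_mul_aeval (hermite n) s).congr_deriv
    (by rw [hermiteFunction]; ring)

theorem deriv_deriv_hermiteFunction (n : ℕ) (s : ℝ) :
    deriv (deriv (hermiteFunction n)) s = (s ^ 2 / 4 - (n + 1 / 2)) * hermiteFunction n s := by
  have hlin : HasDerivAt (fun s : ℝ => s / 2) (1 / 2) s := (hasDerivAt_id s).div_const 2
  rw [funext fun s => (hasDerivAt_hermiteFunction n s).deriv,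
    ((hasDerivAt_exp_neg_sq_div_four_mul_aeval (derivative (hermite n)) s).fun_sub
      (hlin.fun_mul (hasDerivAt_hermiteFunction n s))).deriv,
    derivative_derivative_hermite, hermiteFunction]
  simp only [map_sub, map_mul, aeval_X, map_natCast]
  ring

theorem deriv_deriv_comp_mul_sub {𝕜 F : Type*} [NontriviallyNormedField 𝕜]
    [NormedAddCommGroup F] [NormedSpace 𝕜 F] (f : 𝕜 → F) (b a t : 𝕜) :
    deriv (deriv fun t => f (b * (t - a))) t = b ^ 2 • deriv (deriv f) (b * (t - a)) := by
  have h (g : 𝕜 → F) :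
      deriv (fun t => g (b * (t - a))) = fun t => b • deriv g (b * (t - a)) := by
    funext t
    exact (deriv_comp_sub_const (f := fun u => g (b * u)) ..).trans (deriv_comp_mul_left ..)
  rw [h, deriv_fun_const_smul_field, h, pow_two, mul_smul]

theorem Complex.deriv_ofReal_comp (f : ℝ → ℝ) :
    deriv (fun t => (f t : ℂ)) = fun t => ((deriv f t : ℝ) : ℂ) := by
  funext t
  by_cases hf : DifferentiableAt ℝ f t
  · exact hf.hasDerivAt.ofReal_comp.deriv
  · rw [deriv_zero_of_not_differentiableAt hf, deriv_zero_of_not_differentiableAt, ofReal_zero]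
    exact fun h => hf (by simpa [Function.comp_def] using reCLM.differentiableAt.comp t h)

section PlaneWave

open Complex

variable {θ : ℝ → ℝ} {k : ℝ}

theorem deriv_cexp_I_mul_mul_const (hθ : ∀ s, HasDerivAt θ k s) (c : ℂ) :
    deriv (fun s => cexp (I * θ s) * c) = fun s => I * k * (cexp (I * θ s) * c) := by
  funext s
  rw [((((hθ s).ofReal_comp.const_mul I).cexp).mul_const c).deriv]
  ring

theorem deriv_deriv_cexp_I_mul_mul_const (hθ : ∀ s, HasDerivAt θ k s) (c : ℂ) :
    deriv (deriv fun s => cexp (I * θ s) * c) = fun s => -(k : ℂ) ^ 2 * (cexp (I * θ s) * c) := by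
  rw [deriv_cexp_I_mul_mul_const hθ, deriv_const_mul_field', deriv_cexp_I_mul_mul_const hθ]
  funext s
  linear_combination (k : ℂ) ^ 2 * (cexp (I * θ s) * c) * I_sq

end PlaneWave

theorem deriv_deriv_const_mul_ofReal_comp (c : ℂ) (f : ℝ → ℝ) :
    deriv (deriv fun t => c * (f t : ℂ)) = fun t => c * ((deriv (deriv f) t : ℝ) : ℂ) := by
  rw [deriv_const_mul_field', deriv_const_mul_field', Complex.deriv_ofReal_comp,
    Complex.deriv_ofReal_comp]

theorem ofReal_hermiteFunction_mul {ℏ μ Ω b : ℝ} (hℏ : ℏ ≠ 0) (hb : b ^ 2 = 2 * μ * Ω / ℏ)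
    (n : ℕ) (s : ℝ) :
    (hermiteFunction n (b * s) : ℂ) =
      Complex.exp (-((μ * Ω * s ^ 2 / (2 * ℏ) : ℝ) : ℂ)) * aeval ((b * s : ℝ) : ℂ) (hermite n) := by
  have harg : μ * Ω * s ^ 2 / (2 * ℏ) = (b * s) ^ 2 / 4 := by
    rw [mul_pow, hb]
    field_simp
    ring
  rw [harg, Complex.ofReal_hermiteFunction]

theorem sq_sub_mul_add_eq_sq_sub_div_sqrt_two {m : ℝ} (hm : m ≠ 0) (ℏ k v : ℝ) :
    v ^ 2 - Real.sqrt 2 * ℏ / m * v * k + ℏ ^ 2 / (2 * m ^ 2) * k ^ 2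
      = (v - ℏ * k / (Real.sqrt 2 * m)) ^ 2 := by
  have h2 : Real.sqrt 2 ^ 2 = 2 := Real.sq_sqrt zero_le_two
  field_simp
  linear_combination (-(2 * m * v * ℏ * k * Real.sqrt 2) + ℏ ^ 2 * k ^ 2) * h2

theorem hermiteFunction_harmonicOscillator_eigen {ℏ μ Ω b : ℝ} (hℏ : ℏ ≠ 0) (hμ : μ ≠ 0)
    (hb : b ^ 2 = 2 * μ * Ω / ℏ) (n : ℕ) (a t : ℝ) :
    -(ℏ ^ 2 / (2 * μ)) * deriv (deriv fun t => hermiteFunction n (b * (t - a))) t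
        + μ * Ω ^ 2 / 2 * (t - a) ^ 2 * hermiteFunction n (b * (t - a))
      = ℏ * Ω * (n + 1 / 2) * hermiteFunction n (b * (t - a)) := by
  rw [deriv_deriv_comp_mul_sub, deriv_deriv_hermiteFunction, smul_eq_mul, mul_pow, hb]
  field_simp
  ring

/-- Landau polaritons: in polaritonic coordinates `(x, z, w, v)` the function
`ψ = exp(i(k_x x + k_z z + k_w w)) · exp(−μΩ(v−v₀)²/(2ℏ)) · He_j(√(2μΩ/ℏ)(v−v₀))`
with `v₀ = ℏk_x/(√2 m_e)` is an eigenfunction of the effective Hamiltonian of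
Landau levels coupled to a cavity mode, with eigenvalue
`ℏ²k_z²/(2m_e) + ℏ²k_w²/(2M) + ℏΩ(j + 1/2)`, where `Ω = √(ω_p² + ω_c²)`. -/
theorem landau_polaritons
    (ℏ m_e ω_c ω_p : ℝ) (hℏ : 0 < ℏ) (hm : 0 < m_e) (hωc : 0 < ω_c) (hωp : 0 < ω_p)
    (m_p m_c M μ Ω : ℝ)
    (hmp : m_p = m_e / ω_p ^ 2) (hmc : m_c = m_e / ω_c ^ 2)
    (hM : M = (m_p + m_c) / 2) (hμ : μ = m_p * m_c / M)
    (hΩ : Ω = Real.sqrt (ω_p ^ 2 + ω_c ^ 2))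
    (k_x k_z k_w : ℝ) (j : ℕ) (v₀ : ℝ)
    (hv₀ : v₀ = ℏ * k_x / (Real.sqrt 2 * m_e))
    (ψ : ℝ → ℝ → ℝ → ℝ → ℂ)
    (hψ : ∀ x z w v : ℝ,
      ψ x z w v =
        Complex.exp (Complex.I * ((k_x * x + k_z * z + k_w * w : ℝ) : ℂ))
          * Complex.exp (-(((μ * Ω * (v - v₀) ^ 2 / (2 * ℏ) : ℝ) : ℂ)))
          * Polynomial.aeval ((Real.sqrt (2 * μ * Ω / ℏ) * (v - v₀) : ℝ) : ℂ)
              (Polynomial.hermite j)) :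
    ∀ x z w v : ℝ,
      -(ℏ : ℂ) ^ 2 / (2 * (m_e : ℂ)) * deriv (deriv (fun t : ℝ => ψ x t w v)) z
          - (ℏ : ℂ) ^ 2 / (2 * (M : ℂ)) * deriv (deriv (fun t : ℝ => ψ x z t v)) w
          - (ℏ : ℂ) ^ 2 / (2 * (μ : ℂ)) * deriv (deriv (fun t : ℝ => ψ x z w t)) v
          + ((μ * Ω ^ 2 / 2 : ℝ) : ℂ) *
              ((v : ℂ) ^ 2 * ψ x z w v
                + (Real.sqrt 2 : ℂ) * Complex.I * (ℏ : ℂ) / (m_e : ℂ) * (v : ℂ)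
                    * deriv (fun t : ℝ => ψ t z w v) x
                - (ℏ : ℂ) ^ 2 / (2 * (m_e : ℂ) ^ 2)
                    * deriv (deriv (fun t : ℝ => ψ t z w v)) x)
        = ((ℏ ^ 2 * k_z ^ 2 / (2 * m_e) + ℏ ^ 2 * k_w ^ 2 / (2 * M)
              + ℏ * Ω * ((j : ℝ) + 1 / 2) : ℝ) : ℂ) * ψ x z w v := by
  intro x z w v
  have hμ_pos : 0 < μ := by subst hmp hmc hM hμ; positivity
  have hΩ_nonneg : 0 ≤ Ω := hΩ ▸ Real.sqrt_nonneg _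
  set b := Real.sqrt (2 * μ * Ω / ℏ)
  have hb : b ^ 2 = 2 * μ * Ω / ℏ := Real.sq_sqrt (by positivity)
  have hψ_sep : ∀ x z w v, ψ x z w v =
      Complex.exp (Complex.I * ((k_x * x + k_z * z + k_w * w : ℝ) : ℂ))
        * ((hermiteFunction j (b * (v - v₀)) : ℝ) : ℂ) := fun x z w v => by
    rw [hψ, mul_assoc, ofReal_hermiteFunction_mul hℏ.ne' hb]
  have hθx : ∀ s, HasDerivAt (fun t => k_x * t + k_z * z + k_w * w) k_x s := fun s => by
    simpa using (((hasDerivAt_id s).const_mul k_x).add_const (k_z * z)).add_const (k_w * w)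
  have hθz : ∀ s, HasDerivAt (fun t => k_x * x + k_z * t + k_w * w) k_z s := fun s => by
    simpa using (((hasDerivAt_id s).const_mul k_z).const_add (k_x * x)).add_const (k_w * w)
  have hθw : ∀ s, HasDerivAt (fun t => k_x * x + k_z * z + k_w * t) k_w s := fun s => by
    simpa using ((hasDerivAt_id s).const_mul k_w).const_add (k_x * x + k_z * z)
  have hsq := hv₀ ▸ sq_sub_mul_add_eq_sq_sub_div_sqrt_two hm.ne' ℏ k_x v
  have hosc := hermiteFunction_harmonicOscillator_eigen hℏ.ne' hμ_pos.ne' hb j v₀ v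
  simp only [hψ_sep]
  rw [deriv_deriv_cexp_I_mul_mul_const hθx, deriv_deriv_cexp_I_mul_mul_const hθz,
    deriv_deriv_cexp_I_mul_mul_const hθw, deriv_cexp_I_mul_mul_const hθx,
    deriv_deriv_const_mul_ofReal_comp]
  beta_reduce
  set E := Complex.exp (Complex.I * ((k_x * x + k_z * z + k_w * w : ℝ) : ℂ))
  set φ := hermiteFunction j (b * (v - v₀))
  linear_combination (norm := (push_cast; ring1))
    E * congrArg Complex.ofReal hosc
      + ((μ * Ω ^ 2 / 2 * φ : ℝ) : ℂ) * E * congrArg Complex.ofReal hsq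
      + ((μ * Ω ^ 2 / 2 * Real.sqrt 2 * ℏ / m_e * v * k_x * φ : ℝ) : ℂ) * E * Complex.I_sq
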